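/- arXiv:2207.09284 — 2 statements merged into one kernel-verified Lean document; each statement's English description precedes it below -/
import Mathlib

section
/- Under the assumptions that Ω is positively stable for the gradient flow of f and all flow lines starting in Ω converge to x₀ ∈ Ω, one has f(x₀) = min_{\overline{Ω}} f < min_{∂Ω} f. -/
open Filter Topology Set Bornology

theorem aux_contDiff_gradient {d : ℕ} (f : EuclideanSpace ℝ (Fin d) → ℝ) (hf : ContDiff ℝ (⊤ : ℕ∞) f) :
    ContDiff ℝ (⊤ : ℕ∞) (gradient f) := by
  have h1 : ContDiff ℝ (⊤ : ℕ∞) (fderiv ℝ f) := hf.fderiv_right (by simp)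
  have h2 : ContDiff ℝ (⊤ : ℕ∞) (fun p : EuclideanSpace ℝ (Fin d) →L[ℝ] ℝ =>
      (InnerProductSpace.toDual ℝ (EuclideanSpace ℝ (Fin d))).symm p) :=
    (InnerProductSpace.toDual ℝ _).symm.contDiff
  exact h2.comp h1

theorem aux_flowDeriv {d : ℕ} (f : EuclideanSpace ℝ (Fin d) → ℝ) (hf : ContDiff ℝ (⊤ : ℕ∞) f)
    (ψ : ℝ → EuclideanSpace ℝ (Fin d)) (hψ : ∀ t, HasDerivAt ψ (-gradient f (ψ t)) t) (t : ℝ) :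
    HasDerivAt (fun s => f (ψ s)) (-‖gradient f (ψ t)‖ ^ 2) t := by
  have hd : DifferentiableAt ℝ f (ψ t) := hf.differentiable (by simp) (ψ t)
  have hg : HasFDerivAt f (InnerProductSpace.toDual ℝ _ (gradient f (ψ t))) (ψ t) :=
    hasGradientAt_iff_hasFDerivAt.mp hd.hasGradientAt
  have h := hg.comp_hasDerivAt t (hψ t)
  convert h using 1
  · rfl
  · rfl
  · rfl
  rw [InnerProductSpace.toDual_apply_apply, inner_neg_right, real_inner_self_eq_norm_sq]

/-- **The attractor is the global minimum, strictly below the boundary values.**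

If `Ω` is positively stable for the gradient flow of the `C^∞` Morse function `f`
and all flow lines starting in `Ω` converge to `x₀ ∈ Ω`, then
`f(x₀) = min_{closure Ω} f < min_{∂Ω} f`, i.e. `f x₀ ≤ f x` for all `x ∈ closure Ω`
and `f x₀ < f z` for every `z ∈ ∂Ω`. -/
theorem attractor_is_strict_global_min
    {d : ℕ}
    (f : EuclideanSpace ℝ (Fin d) → ℝ) (hf : ContDiff ℝ (⊤ : ℕ∞) f)
    (hbd : ∃ C : ℝ, ∀ x, ‖gradient f x‖ ≤ C ∧ ‖fderiv ℝ (gradient f) x‖ ≤ C)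
    (Ω : Set (EuclideanSpace ℝ (Fin d))) (hΩo : IsOpen Ω) (hΩb : IsBounded Ω)
    (hMorse : ∀ x ∈ closure Ω, gradient f x = 0 →
      Function.Bijective ⇑(fderiv ℝ (gradient f) x))
    (φ : EuclideanSpace ℝ (Fin d) → ℝ → EuclideanSpace ℝ (Fin d))
    (hφ0 : ∀ x, φ x 0 = x)
    (hφ : ∀ x t, HasDerivAt (φ x) (-gradient f (φ x t)) t)
    (hstab : ∀ x ∈ Ω, ∀ t : ℝ, 0 ≤ t → φ x t ∈ Ω)
    (x₀ : EuclideanSpace ℝ (Fin d)) (hx₀ : x₀ ∈ Ω)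
    (hconv : ∀ x ∈ Ω, Tendsto (fun t => φ x t) atTop (𝓝 x₀)) :
    (∀ x ∈ closure Ω, f x₀ ≤ f x) ∧ ∀ z ∈ frontier Ω, f x₀ < f z := by
  classical
  obtain ⟨C, hC⟩ := hbd
  have hgsm : ContDiff ℝ (⊤ : ℕ∞) (gradient f) := aux_contDiff_gradient f hf
  have hgc : Continuous (gradient f) := hgsm.continuous
  have hfc : Continuous f := hf.continuous
  have hφcont : ∀ x, Continuous (φ x) := fun x =>
    continuous_iff_continuousAt.mpr fun t => (hφ x t).continuousAt
  -- trajectories are C-Lipschitz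
  have hlip : ∀ (x : EuclideanSpace ℝ (Fin d)) (s t : ℝ), dist (φ x s) (φ x t) ≤ C * dist s t := by
    intro x s t
    have h := convex_univ.norm_image_sub_le_of_norm_hasDerivWithin_le
      (fun u (_ : u ∈ (univ : Set ℝ)) => (hφ x u).hasDerivWithinAt)
      (fun u _ => by rw [norm_neg]; exact (hC (φ x u)).1) (mem_univ t) (mem_univ s)
    simpa [dist_eq_norm, Real.norm_eq_abs, abs_sub_comm] using h
  have hIcont : ∀ x, Continuous fun s => ‖gradient f (φ x s)‖ ^ 2 := fun x =>
    ((hgc.comp (hφcont x)).norm).pow 2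
  -- FTC along trajectories
  have hftc : ∀ (x : EuclideanSpace ℝ (Fin d)) (a b : ℝ), f (φ x b) - f (φ x a)
      = -∫ s in a..b, ‖gradient f (φ x s)‖ ^ 2 := by
    intro x a b
    rw [← intervalIntegral.integral_neg]
    exact (intervalIntegral.integral_eq_sub_of_hasDerivAt
      (fun s _ => aux_flowDeriv f hf (φ x) (hφ x) s)
      (((hIcont x).neg).intervalIntegrable a b)).symm
  have hdec : ∀ x, ∀ a b : ℝ, a ≤ b → f (φ x b) ≤ f (φ x a) := by
    intro x a b hab
    have h := hftc x a b
    have hnn : 0 ≤ ∫ s in a..b, ‖gradient f (φ x s)‖ ^ 2 :=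
      intervalIntegral.integral_nonneg hab fun s _ => sq_nonneg _
    linarith
  have hge : ∀ x ∈ Ω, ∀ t : ℝ, f x₀ ≤ f (φ x t) := by
    intro x hx t
    have hconv' : Tendsto (fun s => f (φ x s)) atTop (𝓝 (f x₀)) :=
      (hfc.tendsto x₀).comp (hconv x hx)
    refine le_of_tendsto hconv' ?_
    filter_upwards [eventually_ge_atTop t] with s hs using hdec x t s hs
  have hmin : ∀ x ∈ closure Ω, f x₀ ≤ f x := by
    have hsub : Ω ⊆ {x | f x₀ ≤ f x} := fun x hx => by
      have h := hge x hx 0; rwa [hφ0 x] at h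
    exact fun x hx => closure_minimal hsub (isClosed_le continuous_const hfc) hx
  refine ⟨hmin, ?_⟩
  intro z hz
  by_contra hlt
  push_neg at hlt
  have hfz : f z = f x₀ := le_antisymm hlt (hmin z (frontier_subset_closure hz))
  have hzΩ : z ∉ Ω := by
    rw [hΩo.frontier_eq] at hz; exact hz.2
  -- the integral bound
  have hbound : ∀ x ∈ Ω, ∀ T : ℝ,
      (∫ s in (0:ℝ)..T, ‖gradient f (φ x s)‖ ^ 2) ≤ f x - f x₀ := by
    intro x hx T
    have h := hftc x 0 T
    rw [hφ0 x] at h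
    have h2 := hge x hx T
    linarith
  by_cases hgz : gradient f z = 0
  · -- Morse case: z is a nondegenerate critical point
    have hA := hMorse z (frontier_subset_closure hz) hgz
    have hstrict : HasStrictFDerivAt (gradient f) (fderiv ℝ (gradient f) z) z :=
      hgsm.contDiffAt.hasStrictFDerivAt (by simp)
    let eL : EuclideanSpace ℝ (Fin d) ≃ₗ[ℝ] EuclideanSpace ℝ (Fin d) :=
      LinearEquiv.ofBijective
        ((fderiv ℝ (gradient f) z) : EuclideanSpace ℝ (Fin d) →ₗ[ℝ] EuclideanSpace ℝ (Fin d))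
        (by exact hA)
    let eC : EuclideanSpace ℝ (Fin d) ≃L[ℝ] EuclideanSpace ℝ (Fin d) :=
      eL.toContinuousLinearEquiv
    have heq : (eC : EuclideanSpace ℝ (Fin d) →L[ℝ] EuclideanSpace ℝ (Fin d))
        = fderiv ℝ (gradient f) z := by ext v; rfl
    have hstrict' : HasStrictFDerivAt (gradient f)
        (eC : EuclideanSpace ℝ (Fin d) →L[ℝ] EuclideanSpace ℝ (Fin d)) z := by
      rw [heq]; exact hstrict
    have hPhcoe : ⇑(hstrict'.toOpenPartialHomeomorph (gradient f)) = gradient f :=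
      hstrict'.toOpenPartialHomeomorph_coe
    obtain ⟨r₁, hr₁, hball₁⟩ := Metric.isOpen_iff.mp
      (hstrict'.toOpenPartialHomeomorph (gradient f)).open_source z
      hstrict'.mem_toOpenPartialHomeomorph_source
    have hginj : ∀ y, dist y z < r₁ → gradient f y = 0 → y = z := by
      intro y hy h0
      refine (hstrict'.toOpenPartialHomeomorph (gradient f)).injOn
        (hball₁ (Metric.mem_ball.mpr hy)) hstrict'.mem_toOpenPartialHomeomorph_source ?_
      show (hstrict'.toOpenPartialHomeomorph (gradient f)) y
        = (hstrict'.toOpenPartialHomeomorph (gradient f)) z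
      rw [congrFun hPhcoe y, congrFun hPhcoe z, h0, hgz]
    have hx₀z : x₀ ≠ z := fun h => hzΩ (h ▸ hx₀)
    set δ := dist x₀ z with hδ_def
    have hδ : 0 < δ := dist_pos.mpr hx₀z
    set r := min r₁ δ / 3 with hr_def
    have hminpos : 0 < min r₁ δ := lt_min hr₁ hδ
    have hr : 0 < r := by rw [hr_def]; linarith
    have h2rδ : 2 * r < δ := by
      have h := min_le_right r₁ δ; rw [hr_def]; linarith
    have h2r₁ : 2 * r < r₁ := by
      have h := min_le_left r₁ δ; rw [hr_def]; linarith
    set K := Metric.closedBall z (2*r) \ Metric.ball z r with hK_def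
    have hKc : IsCompact K := (isCompact_closedBall z (2*r)).diff Metric.isOpen_ball
    have hwK : z + (2*r/δ) • (x₀ - z) ∈ K := by
      have hdist : dist (z + (2*r/δ) • (x₀ - z)) z = 2*r := by
        rw [dist_eq_norm, add_sub_cancel_left, norm_smul, Real.norm_eq_abs,
          abs_of_nonneg (by positivity), show ‖x₀ - z‖ = δ from (dist_eq_norm x₀ z).symm]
        field_simp
      constructor
      · exact Metric.mem_closedBall.mpr (le_of_eq hdist)
      · intro hmem
        have := Metric.mem_ball.mp hmem
        rw [hdist] at this
        linarith
    obtain ⟨w₀, hw₀K, hminOn⟩ := hKc.exists_isMinOn ⟨_, hwK⟩ (hgc.norm.continuousOn)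
    set ε₀ := ‖gradient f w₀‖ with hε₀_def
    have hw₀b : dist w₀ z < r₁ :=
      lt_of_le_of_lt (Metric.mem_closedBall.mp hw₀K.1) h2r₁
    have hw₀r : r ≤ dist w₀ z := not_lt.mp (fun h => hw₀K.2 (Metric.mem_ball.mpr h))
    have hε₀ : 0 < ε₀ := by
      rw [hε₀_def, norm_pos_iff]
      intro h0
      have hw₀z := hginj w₀ hw₀b h0
      rw [hw₀z, dist_self] at hw₀r
      linarith
    have hCpos : 0 < C := lt_of_lt_of_le hε₀ (hC w₀).1
    have hzU : z ∈ Metric.ball z r ∩ {y | f y < f x₀ + ε₀^2 * r / C} := by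
      refine ⟨Metric.mem_ball_self hr, ?_⟩
      simp only [mem_setOf_eq, hfz]
      have : 0 < ε₀^2 * r / C := by positivity
      linarith
    obtain ⟨x, ⟨hxball, hxf⟩, hxΩ⟩ := mem_closure_iff.mp (frontier_subset_closure hz) _
      (Metric.isOpen_ball.inter (isOpen_lt hfc continuous_const)) hzU
    simp only [mem_setOf_eq] at hxf
    obtain ⟨N, hN⟩ := (Metric.tendsto_atTop.mp (hconv x hxΩ)) (δ - 2*r) (by linarith)
    set T := max N 0 with hT_def
    have hT0 : (0:ℝ) ≤ T := le_max_right N 0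
    set u : ℝ → ℝ := fun t => dist (φ x t) z with hu_def
    have hu : Continuous u := (hφcont x).dist continuous_const
    have hTfar : 2*r < u T := by
      have h1 := hN T (le_max_left N 0)
      have h2 : δ ≤ dist x₀ (φ x T) + dist (φ x T) z := dist_triangle x₀ (φ x T) z
      rw [dist_comm] at h1
      simp only [hu_def]
      linarith
    have hu0 : u 0 < r := by
      simp only [hu_def]; rw [hφ0 x]; exact Metric.mem_ball.mp hxball
    set Sb : Set ℝ := Icc 0 T ∩ {t | 2*r ≤ u t} with hSb_def
    have hSbne : Sb.Nonempty := ⟨T, ⟨hT0, le_refl T⟩, hTfar.le⟩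
    have hSbcl : IsClosed Sb := isClosed_Icc.inter (isClosed_le continuous_const hu)
    have hSbbdd : BddBelow Sb := ⟨0, fun t ht => ht.1.1⟩
    set b := sInf Sb with hb_def
    have hbmem : b ∈ Sb := hSbcl.csInf_mem hSbne hSbbdd
    have hbT : b ≤ T := hbmem.1.2
    have hb0 : 0 < b := by
      rcases lt_or_eq_of_le hbmem.1.1 with h | h
      · exact h
      · exfalso
        have h2 := hbmem.2
        rw [← h] at h2
        simp only [mem_setOf_eq] at h2
        linarith
    have hblt : ∀ t, 0 ≤ t → t < b → u t < 2*r := by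
      intro t ht0 htb
      by_contra hge'
      push_neg at hge'
      have hmem : t ∈ Sb := ⟨⟨ht0, le_trans htb.le hbT⟩, hge'⟩
      exact absurd (csInf_le hSbbdd hmem) (not_le.mpr htb)
    set Sa : Set ℝ := Icc 0 b ∩ {t | u t ≤ r} with hSa_def
    have hSane : Sa.Nonempty := ⟨0, ⟨le_refl 0, hb0.le⟩, hu0.le⟩
    have hSacl : IsClosed Sa := isClosed_Icc.inter (isClosed_le hu continuous_const)
    have hSabdd : BddAbove Sa := ⟨b, fun t ht => ht.1.2⟩
    set a := sSup Sa with ha_def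
    have hamem : a ∈ Sa := hSacl.csSup_mem hSane hSabdd
    have ha0 : 0 ≤ a := hamem.1.1
    have hab : a < b := by
      rcases lt_or_eq_of_le hamem.1.2 with h | h
      · exact h
      · exfalso
        have h2 := hamem.2
        rw [h] at h2
        simp only [mem_setOf_eq] at h2
        have h3 : 2 * r ≤ u b := hbmem.2
        linarith
    have hagt : ∀ t, a < t → t ≤ b → r < u t := by
      intro t hat htb
      by_contra hle
      push_neg at hle
      have hmem : t ∈ Sa := ⟨⟨le_trans ha0 hat.le, htb⟩, hle⟩
      exact absurd (le_csSup hSabdd hmem) (not_le.mpr hat)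
    have hann : ∀ s ∈ Icc a b, φ x s ∈ K := by
      intro s hs
      have hub : u s ≤ 2*r := by
        rcases lt_or_eq_of_le hs.2 with h | h
        · exact (hblt s (le_trans ha0 hs.1) h).le
        · have htends : Tendsto u (𝓝[<] s) (𝓝 (u s)) := hu.continuousAt.continuousWithinAt
          refine le_of_tendsto htends ?_
          filter_upwards [Ioo_mem_nhdsLT_of_mem
            (show s ∈ Ioc a s from ⟨(by rw [h]; exact hab), le_refl s⟩)] with t ht
          exact (hblt t (le_trans ha0 ht.1.le) (h ▸ ht.2)).le
      have hlb : r ≤ u s := by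
        rcases lt_or_eq_of_le hs.1 with h | h
        · exact (hagt s h hs.2).le
        · have htends : Tendsto u (𝓝[>] s) (𝓝 (u s)) := hu.continuousAt.continuousWithinAt
          refine ge_of_tendsto htends ?_
          filter_upwards [Ioo_mem_nhdsGT_of_mem
            (show s ∈ Ico s b from ⟨le_refl s, (by rw [← h]; exact hab)⟩)] with t ht
          exact (hagt t (h ▸ ht.1) ht.2.le).le
      exact ⟨Metric.mem_closedBall.mpr hub,
        fun hmem => absurd (Metric.mem_ball.mp hmem) (not_lt.mpr hlb)⟩
    have hlow : ∀ s ∈ Icc a b, ε₀ ≤ ‖gradient f (φ x s)‖ := fun s hs =>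
      isMinOn_iff.mp hminOn _ (hann s hs)
    have hint1 : ε₀^2 * (b - a) ≤ ∫ s in a..b, ‖gradient f (φ x s)‖^2 := by
      have h := intervalIntegral.integral_mono_on (μ := MeasureTheory.volume) hab.le
        (intervalIntegrable_const (c := ε₀^2)) ((hIcont x).intervalIntegrable a b)
        (fun s hs => pow_le_pow_left₀ hε₀.le (hlow s hs) 2)
      rw [intervalIntegral.integral_const, smul_eq_mul] at h
      linarith
    have hsplit : (∫ s in a..b, ‖gradient f (φ x s)‖^2)
        ≤ ∫ s in (0:ℝ)..T, ‖gradient f (φ x s)‖^2 := by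
      have i1 : IntervalIntegrable (fun s => ‖gradient f (φ x s)‖^2)
        MeasureTheory.volume 0 a := (hIcont x).intervalIntegrable _ _
      have i2 : IntervalIntegrable (fun s => ‖gradient f (φ x s)‖^2)
        MeasureTheory.volume a b := (hIcont x).intervalIntegrable _ _
      have i3 : IntervalIntegrable (fun s => ‖gradient f (φ x s)‖^2)
        MeasureTheory.volume 0 b := (hIcont x).intervalIntegrable _ _
      have i4 : IntervalIntegrable (fun s => ‖gradient f (φ x s)‖^2)
        MeasureTheory.volume b T := (hIcont x).intervalIntegrable _ _
      have e1 := intervalIntegral.integral_add_adjacent_intervals i1 i2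
      have e2 := intervalIntegral.integral_add_adjacent_intervals i3 i4
      have n1 : 0 ≤ ∫ s in (0:ℝ)..a, ‖gradient f (φ x s)‖^2 :=
        intervalIntegral.integral_nonneg ha0 (fun s _ => sq_nonneg _)
      have n2 : 0 ≤ ∫ s in b..T, ‖gradient f (φ x s)‖^2 :=
        intervalIntegral.integral_nonneg hbT (fun s _ => sq_nonneg _)
      linarith
    have htime : r ≤ C * (b - a) := by
      have h1 : u b - u a ≤ dist (φ x b) (φ x a) :=
        le_trans (le_abs_self _) (abs_dist_sub_le (φ x b) (φ x a) z)
      have h2 := hlip x b a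
      rw [Real.dist_eq, abs_of_nonneg (by linarith : (0:ℝ) ≤ b - a)] at h2
      have hua : u a ≤ r := hamem.2
      have hub : 2*r ≤ u b := hbmem.2
      linarith
    have hL := hbound x hxΩ T
    have hfrac : ε₀^2 * (r / C) ≤ ε₀^2 * (b - a) := by
      apply mul_le_mul_of_nonneg_left _ (sq_nonneg ε₀)
      rw [div_le_iff₀ hCpos]
      linarith
    have hrew : ε₀^2 * r / C = ε₀^2 * (r/C) := by ring
    linarith
  · -- z is not critical : fast decrease near z
    have hnz : 0 < ‖gradient f z‖ := norm_pos_iff.mpr hgz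
    have hCpos : 0 < C := lt_of_lt_of_le hnz (hC z).1
    set c : ℝ := ‖gradient f z‖ ^ 2 / 2 with hc_def
    have hc : 0 < c := by positivity
    have hopen : IsOpen {y | c < ‖gradient f y‖ ^ 2} :=
      isOpen_lt continuous_const ((hgc.norm).pow 2)
    have hzmem : z ∈ {y | c < ‖gradient f y‖ ^ 2} := by
      simp only [mem_setOf_eq, hc_def]
      nlinarith
    obtain ⟨ρ, hρ, hball⟩ := Metric.isOpen_iff.mp hopen z hzmem
    set τ : ℝ := ρ / (2 * C) with hτ_def
    have hτ : 0 < τ := by positivity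
    -- pick a starting point
    have hzU : z ∈ Metric.ball z (ρ / 2) ∩ {y | f y < f x₀ + c * τ} := by
      constructor
      · exact Metric.mem_ball_self (by positivity)
      · simp only [mem_setOf_eq, hfz]; nlinarith
    obtain ⟨x, hxU, hxΩ⟩ := mem_closure_iff.mp (frontier_subset_closure hz) _
      (Metric.isOpen_ball.inter (isOpen_lt hfc continuous_const)) hzU
    obtain ⟨hxball, hxf⟩ := hxU
    -- on [0, τ] the trajectory stays in ball z ρ
    have hstay : ∀ s ∈ Icc (0:ℝ) τ, c ≤ ‖gradient f (φ x s)‖ ^ 2 := by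
      intro s hs
      have h1 : dist (φ x s) z ≤ dist (φ x s) (φ x 0) + dist (φ x 0) z := dist_triangle _ _ _
      have h2 : dist (φ x s) (φ x 0) ≤ C * s := by
        have := hlip x s 0
        rwa [Real.dist_eq, sub_zero, abs_of_nonneg hs.1] at this
      have h3 : dist (φ x 0) z < ρ / 2 := by rw [hφ0 x]; exact hxball
      have h4 : C * s ≤ ρ / 2 := by
        have h5 := hs.2
        rw [hτ_def] at h5
        have h6 : C * s ≤ C * (ρ / (2 * C)) := mul_le_mul_of_nonneg_left h5 hCpos.le
        have h7 : C * (ρ / (2 * C)) = ρ / 2 := by field_simp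
        linarith
      have : φ x s ∈ Metric.ball z ρ := by
        simp only [Metric.mem_ball]
        linarith
      exact le_of_lt (hball this)
    have hintlb : c * τ ≤ ∫ s in (0:ℝ)..τ, ‖gradient f (φ x s)‖ ^ 2 := by
      have h := intervalIntegral.integral_mono_on (μ := MeasureTheory.volume) hτ.le
        (intervalIntegrable_const (c := c)) ((hIcont x).intervalIntegrable 0 τ) hstay
      rw [intervalIntegral.integral_const, sub_zero, smul_eq_mul] at h
      linarith
    simp only [mem_setOf_eq] at hxf
    have := hbound x hxΩ τ
    linarith
end

section
/- Let f : \overline{ℝ_-} → ℝ be C^∞ with all derivatives of order ≥ 1 bounded, with 0 as its only critical point, f''(0) = μ < 0, f'(0) = 0, and |f'| ≥ c > 0 outside a compact set. Then for every h > 0 the function x ↦ e^{f(x)/h} belongs to L²(ℝ_-) and in fact to H²(ℝ_-), and the 1-form e^{f/h} dx satisfies d*_{f,h}(e^{f/h} dx) = 0 where d*_{f,h} = e^{f/h} h d* e^{−f/h} (i.e. h ∂_x(e^{f/h} φ) with φ = e^{f/h} vanishes after the weighted co-differential); consequently e^{f/h} dx lies in the kernel of the one-dimensional Witten Laplacian Δ_{f,h}^{Di,(1)}(ℝ_-)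 with tangential Dirichlet boundary conditions. -/
open MeasureTheory Set

section WittenAux

open Filter Topology

private lemma integrableOn_exp_mul_Iio' {c : ℝ} (hc : 0 < c) :
    IntegrableOn (fun x => Real.exp (c * x)) (Iio (0:ℝ)) := by
  have h1 : Integrable ((Iic (0:ℝ)).indicator Real.exp) :=
    (integrableOn_exp_Iic 0).integrable_indicator measurableSet_Iic
  have h2 : Integrable (fun x => (Iic (0:ℝ)).indicator Real.exp (c * x)) :=
    h1.comp_mul_left' hc.ne'
  have h3 : (fun x => (Iic (0:ℝ)).indicator Real.exp (c * x))
      = (Iic (0:ℝ)).indicator (fun x => Real.exp (c * x)) := by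
    funext x
    have hmem : (c * x ∈ Iic (0:ℝ)) ↔ (x ∈ Iic (0:ℝ)) := by
      simp only [mem_Iic]
      constructor
      · intro hx; by_contra hx'; push_neg at hx'; nlinarith
      · intro hx; exact mul_nonpos_of_nonneg_of_nonpos hc.le hx
    by_cases hx : x ∈ Iic (0:ℝ)
    · rw [Set.indicator_of_mem hx, Set.indicator_of_mem (hmem.mpr hx)]
    · rw [Set.indicator_of_notMem hx, Set.indicator_of_notMem (fun hm => hx (hmem.mp hm))]
  rw [h3] at h2
  exact ((integrable_indicator_iff measurableSet_Iic).mp h2).mono_set Iio_subset_Iic_self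

private lemma deriv_pos_on_neg' (f : ℝ → ℝ) (hf : ContDiff ℝ (⊤ : ℕ∞) f)
    (hcrit : ∀ x : ℝ, x ≤ 0 → deriv f x = 0 → x = 0)
    (h0 : deriv f 0 = 0) (hμ : deriv (deriv f) 0 < 0) :
    ∀ x : ℝ, x < 0 → 0 < deriv f x := by
  have hf2 : ContDiff ℝ (⊤:ℕ∞) f := hf.of_le (by simp)
  have hφ : ContDiff ℝ (⊤:ℕ∞) (deriv f) := (contDiff_infty_iff_deriv.mp hf2).2
  have hφc : Continuous (deriv f) := hφ.continuous
  have hd : HasDerivAt (deriv f) (deriv (deriv f) 0) 0 :=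
    ((hφ.differentiable (by norm_num)) 0).hasDerivAt
  have hslope : Tendsto (slope (deriv f) 0) (𝓝[≠] 0) (𝓝 (deriv (deriv f) 0)) :=
    hasDerivAt_iff_tendsto_slope.mp hd
  have hslope' : Tendsto (slope (deriv f) 0) (𝓝[<] 0) (𝓝 (deriv (deriv f) 0)) :=
    hslope.mono_left (nhdsWithin_mono _ (fun x hx => ne_of_lt hx))
  have hev : ∀ᶠ x in 𝓝[<] (0:ℝ), slope (deriv f) 0 x < 0 :=
    hslope'.eventually_lt_const hμ
  obtain ⟨x0, hx0s, hx0⟩ := (hev.and self_mem_nhdsWithin).exists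
  have hx0neg : x0 < 0 := hx0
  have hx0pos : 0 < deriv f x0 := by
    have : slope (deriv f) 0 x0 = deriv f x0 / x0 := by
      simp [slope_def_field, h0]
    rw [this] at hx0s
    rcases div_neg_iff.mp hx0s with ⟨hp, _⟩ | ⟨_, hq⟩
    · exact hp
    · linarith
  intro x hx
  by_contra hle
  push_neg at hle
  have hne : deriv f x ≠ 0 := fun hz => absurd (hcrit x hx.le hz) (ne_of_lt hx)
  have hxneg : deriv f x < 0 := lt_of_le_of_ne hle hne
  have h0mem : (0:ℝ) ∈ uIcc (deriv f x) (deriv f x0) := by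
    rw [Set.mem_uIcc]; left; exact ⟨hxneg.le, hx0pos.le⟩
  obtain ⟨z, hz, hz0⟩ := intermediate_value_uIcc (hφc.continuousOn) h0mem
  have hzneg : z < 0 := by
    rcases Set.mem_uIcc.mp hz with ⟨_, h2⟩ | ⟨_, h2⟩
    · exact lt_of_le_of_lt h2 hx0neg
    · exact lt_of_le_of_lt h2 hx
  exact absurd (hcrit z hzneg.le hz0) (ne_of_lt hzneg)

private lemma exp_bound_aux' (f : ℝ → ℝ) (hf : ContDiff ℝ (⊤ : ℕ∞) f)
    (hpos : ∀ x : ℝ, x < 0 → 0 < deriv f x)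
    (hout : ∃ c > 0, ∃ R > 0, ∀ x : ℝ, x ≤ -R → c ≤ |deriv f x|)
    (h : ℝ) (hh : 0 < h) :
    ∃ A b : ℝ, 0 < A ∧ 0 < b ∧
      ∀ x : ℝ, x ≤ 0 → Real.exp (f x / h) ≤ A * Real.exp (b * x) := by
  obtain ⟨c, hc, R, hR, hcR⟩ := hout
  have hfc : Continuous f := hf.continuous
  obtain ⟨xm, hxm, hmax⟩ := isCompact_Icc.exists_isMaxOn
    (Set.nonempty_Icc.mpr (by linarith : -R ≤ (0:ℝ))) (hfc.continuousOn (s := Icc (-R) 0))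
  set M := f xm with hM
  have hMb : ∀ x ∈ Icc (-R) (0:ℝ), f x ≤ M := fun x hx => hmax hx
  have hlin : ∀ x : ℝ, x ≤ -R → f x ≤ f (-R) + c * (x + R) := by
    intro x hx
    rcases eq_or_lt_of_le hx with heq | hlt
    · subst heq; simp
    · obtain ⟨ξ, hξ, hslope⟩ := exists_deriv_eq_slope f hlt
        (hfc.continuousOn) (fun y _ => ((hf.differentiable (by simp)) y).differentiableWithinAt)
      have hξneg : ξ < -R := hξ.2
      have hξc : c ≤ deriv f ξ := by
        have h1 := hcR ξ hξneg.le
        have h2 : 0 < deriv f ξ := hpos ξ (by linarith)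
        rwa [abs_of_pos h2] at h1
      have hd : -R - x > 0 := by linarith
      rw [hslope] at hξc
      rw [le_div_iff₀ hd] at hξc
      nlinarith
  refine ⟨Real.exp (M / h + (c / h) * R), c / h, Real.exp_pos _, by positivity, ?_⟩
  intro x hx
  rw [← Real.exp_add, Real.exp_le_exp]
  by_cases hxR : -R ≤ x
  · have h1 : f x ≤ M := hMb x ⟨hxR, hx⟩
    have h2 : f x / h ≤ M / h := div_le_div_of_nonneg_right h1 hh.le
    nlinarith [mul_nonneg (div_nonneg hc.le hh.le) (by linarith : (0:ℝ) ≤ R + x)]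
  · push_neg at hxR
    have h1 : f x ≤ M + c * (x + R) := by
      have := hlin x hxR.le
      have h2 : f (-R) ≤ M := hMb (-R) ⟨le_refl _, by linarith⟩
      linarith
    have h2 : f x / h ≤ (M + c * (x + R)) / h := div_le_div_of_nonneg_right h1 hh.le
    have h3 : (M + c * (x + R)) / h = M / h + c / h * R + c / h * x := by ring
    linarith [h2.trans_eq h3]

end WittenAux

/-- **The unstable Gaussian-type state `e^{f/h} dx` on the half-line.**

Let `f : closure ℝ₋ → ℝ` (given here as a smooth function on `ℝ`) be `C^∞` with all
derivatives of order `≥ 1` bounded on `ℝ₋`, with `0` as its only critical point in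
`closure ℝ₋`, `f'(0) = 0`, `f''(0) = μ < 0`, and `|f'| ≥ c > 0` outside a compact set.
Then for every `h > 0` the function `x ↦ e^{f(x)/h}` belongs to `L²(ℝ₋)` and in fact
to `H²(ℝ₋)` (it and its first two derivatives are square integrable on `ℝ₋`);
moreover the weighted co-differential `d*_{f,h}` applied to the 1-form `e^{f/h} dx`
vanishes, `−h ∂ₓ(e^{f/h}) + f'·e^{f/h} = 0`, and consequently `e^{f/h} dx` lies in the
kernel of the one-dimensional Witten Laplacian
`Δ^{Di,(1)}_{f,h}(ℝ₋) = d_{f,h} d*_{f,h}` on 1-forms with tangential Dirichlet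
boundary conditions. -/
theorem exp_f_over_h_in_kernel_of_witten_laplacian
    (f : ℝ → ℝ) (hf : ContDiff ℝ (⊤ : ℕ∞) f)
    (hbd : ∀ n : ℕ, 1 ≤ n → ∃ C : ℝ, ∀ x : ℝ, x ≤ 0 → |iteratedDeriv n f x| ≤ C)
    (hcrit : ∀ x : ℝ, x ≤ 0 → deriv f x = 0 → x = 0)
    (h0 : deriv f 0 = 0)
    (hμ : deriv (deriv f) 0 < 0)
    (hout : ∃ c > 0, ∃ R > 0, ∀ x : ℝ, x ≤ -R → c ≤ |deriv f x|)
    (h : ℝ) (hh : 0 < h) :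
    MemLp (fun x => Real.exp (f x / h)) 2 (volume.restrict (Iio (0 : ℝ))) ∧
    MemLp (deriv fun x => Real.exp (f x / h)) 2 (volume.restrict (Iio (0 : ℝ))) ∧
    MemLp (deriv (deriv fun x => Real.exp (f x / h))) 2
      (volume.restrict (Iio (0 : ℝ))) ∧
    (∀ x : ℝ, x ≤ 0 →
      -h * deriv (fun y => Real.exp (f y / h)) x
        + deriv f x * Real.exp (f x / h) = 0) ∧
    (∀ x : ℝ, x ≤ 0 →
      h * deriv (fun y =>
            -h * deriv (fun w => Real.exp (f w / h)) y
              + deriv f y * Real.exp (f y / h)) x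
        + deriv f x *
            (-h * deriv (fun y => Real.exp (f y / h)) x
              + deriv f x * Real.exp (f x / h)) = 0) := by
  obtain ⟨A, b, hA, hb, hbound⟩ := exp_bound_aux' f hf
    (deriv_pos_on_neg' f hf hcrit h0 hμ) hout h hh
  have hf2 : ContDiff ℝ (⊤:ℕ∞) f := hf.of_le (by simp)
  have hfd : Differentiable ℝ f := hf.differentiable (by simp)
  have hφ : ContDiff ℝ (⊤:ℕ∞) (deriv f) := (contDiff_infty_iff_deriv.mp hf2).2
  have hφd : Differentiable ℝ (deriv f) := hφ.differentiable (by norm_num)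
  have hφc : Continuous (deriv f) := hφ.continuous
  have hφ'c : Continuous (deriv (deriv f)) :=
    ((contDiff_infty_iff_deriv.mp hφ).2).continuous
  -- derivative formulas
  have hgd : ∀ x : ℝ, HasDerivAt (fun y => Real.exp (f y / h))
      (Real.exp (f x / h) * (deriv f x / h)) x :=
    fun x => (((hfd x).hasDerivAt.div_const h)).exp
  have hderiv : deriv (fun y => Real.exp (f y / h))
      = fun x => Real.exp (f x / h) * (deriv f x / h) := funext fun x => (hgd x).deriv
  have hgd2 : ∀ x : ℝ, HasDerivAt (fun y => Real.exp (f y / h) * (deriv f y / h))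
      (Real.exp (f x / h) * (deriv f x / h) * (deriv f x / h)
        + Real.exp (f x / h) * (deriv (deriv f) x / h)) x :=
    fun x => (hgd x).mul (((hφd x).hasDerivAt.div_const h))
  have hderiv2 : deriv (deriv (fun y => Real.exp (f y / h)))
      = fun x => Real.exp (f x / h) * (deriv f x / h) * (deriv f x / h)
        + Real.exp (f x / h) * (deriv (deriv f) x / h) := by
    rw [hderiv]; exact funext fun x => (hgd2 x).deriv
  -- MemLp of the comparison function
  have hgc : Continuous (fun x => Real.exp (f x / h)) :=
    Real.continuous_exp.comp (hf.continuous.div_const h)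
  have hcomp : MemLp (fun x => A * Real.exp (b * x)) 2 (volume.restrict (Iio (0:ℝ))) := by
    have hmeas : AEStronglyMeasurable (fun x => A * Real.exp (b * x))
        (volume.restrict (Iio (0:ℝ))) :=
      (continuous_const.mul (Real.continuous_exp.comp (continuous_const.mul
        continuous_id))).aestronglyMeasurable
    rw [memLp_two_iff_integrable_sq hmeas]
    have heq : (fun x => (A * Real.exp (b * x)) ^ 2)
        = fun x => A ^ 2 * Real.exp (2 * b * x) := by
      funext x
      rw [mul_pow, sq (Real.exp (b*x)), ← Real.exp_add]
      ring_nf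
    rw [heq]
    exact (integrableOn_exp_mul_Iio' (by positivity : (0:ℝ) < 2*b)).const_mul _
  -- bounds on the negative half line from hbd
  obtain ⟨C1, hC1⟩ := hbd 1 le_rfl
  obtain ⟨C2, hC2⟩ := hbd 2 (by norm_num)
  have hC1' : ∀ x : ℝ, x ≤ 0 → |deriv f x| ≤ C1 := by
    intro x hx
    have := hC1 x hx
    rwa [iteratedDeriv_one] at this
  have hC2' : ∀ x : ℝ, x ≤ 0 → |deriv (deriv f) x| ≤ C2 := by
    intro x hx
    have := hC2 x hx
    rwa [iteratedDeriv_succ, iteratedDeriv_one] at this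
  have hC1nn : 0 ≤ C1 := le_trans (abs_nonneg _) (hC1' 0 le_rfl)
  have hC2nn : 0 ≤ C2 := le_trans (abs_nonneg _) (hC2' 0 le_rfl)
  -- the three MemLp statements
  have m0 : MemLp (fun x => Real.exp (f x / h)) 2 (volume.restrict (Iio (0 : ℝ))) := by
    refine hcomp.of_le hgc.aestronglyMeasurable ?_
    filter_upwards [ae_restrict_mem measurableSet_Iio] with x hx
    have hx0 : x ≤ 0 := le_of_lt hx
    rw [Real.norm_eq_abs, Real.norm_eq_abs, abs_of_pos (Real.exp_pos _),
      abs_of_pos (mul_pos hA (Real.exp_pos _))]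
    exact hbound x hx0
  have m1 : MemLp (deriv fun x => Real.exp (f x / h)) 2 (volume.restrict (Iio (0 : ℝ))) := by
    refine (hcomp.const_mul (C1 / h)).of_le ?_ ?_
    · rw [hderiv]
      exact (hgc.mul (hφc.div_const h)).aestronglyMeasurable
    · filter_upwards [ae_restrict_mem measurableSet_Iio] with x hx
      have hx0 : x ≤ 0 := le_of_lt hx
      rw [hderiv, Real.norm_eq_abs, Real.norm_eq_abs]
      have h1 : |Real.exp (f x / h) * (deriv f x / h)|
          = Real.exp (f x / h) * (|deriv f x| / h) := by
        rw [abs_mul, abs_of_pos (Real.exp_pos _), abs_div, abs_of_pos hh]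
      rw [h1]
      have h2 : Real.exp (f x / h) * (|deriv f x| / h)
          ≤ (A * Real.exp (b * x)) * (C1 / h) := by
        apply mul_le_mul (hbound x hx0)
          (div_le_div_of_nonneg_right (hC1' x hx0) hh.le) (by positivity) (by positivity)
      have h3 : (A * Real.exp (b * x)) * (C1 / h) = C1 / h * (A * Real.exp (b * x)) := by ring
      calc Real.exp (f x / h) * (|deriv f x| / h)
          ≤ C1 / h * (A * Real.exp (b * x)) := by rw [← h3]; exact h2
        _ ≤ |C1 / h * (A * Real.exp (b * x))| := le_abs_self _
  have m2 : MemLp (deriv (deriv fun x => Real.exp (f x / h))) 2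
      (volume.restrict (Iio (0 : ℝ))) := by
    refine (hcomp.const_mul ((C1 / h) * (C1 / h) + C2 / h)).of_le ?_ ?_
    · rw [hderiv2]
      exact ((hgc.mul (hφc.div_const h)).mul (hφc.div_const h)
        |>.add (hgc.mul (hφ'c.div_const h))).aestronglyMeasurable
    · filter_upwards [ae_restrict_mem measurableSet_Iio] with x hx
      have hx0 : x ≤ 0 := le_of_lt hx
      rw [hderiv2, Real.norm_eq_abs, Real.norm_eq_abs]
      set E := Real.exp (f x / h) with hE
      have hEpos : 0 < E := Real.exp_pos _
      have h1 : |E * (deriv f x / h) * (deriv f x / h) + E * (deriv (deriv f) x / h)|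
          ≤ E * (|deriv f x| / h) * (|deriv f x| / h) + E * (|deriv (deriv f) x| / h) := by
        refine (abs_add_le _ _).trans ?_
        apply add_le_add
        · simp [abs_mul, abs_div, abs_of_pos hEpos, abs_of_pos hh]
        · simp [abs_mul, abs_div, abs_of_pos hEpos, abs_of_pos hh]
      refine h1.trans ?_
      have h2 : E * (|deriv f x| / h) * (|deriv f x| / h) + E * (|deriv (deriv f) x| / h)
          ≤ (A * Real.exp (b * x)) * ((C1 / h) * (C1 / h) + C2 / h) := by
        have hE' : E ≤ A * Real.exp (b * x) := hbound x hx0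
        have hd1 : |deriv f x| / h ≤ C1 / h := div_le_div_of_nonneg_right (hC1' x hx0) hh.le
        have hd2 : |deriv (deriv f) x| / h ≤ C2 / h := div_le_div_of_nonneg_right (hC2' x hx0) hh.le
        have hA1 : 0 ≤ |deriv f x| / h := by positivity
        have hA2 : 0 ≤ |deriv (deriv f) x| / h := by positivity
        nlinarith [Real.exp_pos (b*x), mul_pos hA (Real.exp_pos (b*x)),
          mul_le_mul hd1 hd1 hA1 (by positivity : (0:ℝ) ≤ C1 / h)]
      refine h2.trans ?_
      have h3 : (A * Real.exp (b * x)) * ((C1 / h) * (C1 / h) + C2 / h)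
          = ((C1 / h) * (C1 / h) + C2 / h) * (A * Real.exp (b * x)) := by ring
      rw [h3]
      exact le_abs_self _
  -- the algebraic identities
  have e4 : ∀ x : ℝ, -h * deriv (fun y => Real.exp (f y / h)) x
      + deriv f x * Real.exp (f x / h) = 0 := by
    intro x
    rw [hderiv]
    field_simp
    ring
  refine ⟨m0, m1, m2, fun x _ => e4 x, ?_⟩
  intro x hx
  have hzero : (fun y => -h * deriv (fun w => Real.exp (f w / h)) y
      + deriv f y * Real.exp (f y / h)) = fun _ => (0:ℝ) := funext fun y => e4 y
  rw [hzero, deriv_const]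
  rw [e4 x]
  ring
end
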